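/- arXiv:1305.0127 — 2 statements merged into one kernel-verified Lean document; each statement's English description precedes it below -/
import Mathlib

section
/- Let S be a factorial set of words over alphabet A with k+1 = Card(S ∩ A). If S is strong (m(w) ≥ 0 for all w ∈ S), then s_n = p_{n+1} − p_n ≥ k for all n ≥ 0; if S is weak (m(w) ≤ 0 for all w ∈ S), then s_n ≤ k for all n ≥ 0. -/
/-! Counting the words of length `n + 2` of a factorial set `S` by their central factor of
length `n` gives `p (n+2) - 2 p (n+1) + p n = ∑_{|w| = n} m(w)`, so the first difference
`s n = p (n+1) - p n` is nondecreasing when `S` is strong and nonincreasing when `S` is weak.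
It starts at `s 0 = p 1 - p 0 = (k + 1) - 1 = k`. -/

namespace Paper

variable {A : Type*}

/-- A set of words is factorial if it contains all factors of its elements. -/
def Factorial (S : Set (List A)) : Prop := ∀ w ∈ S, ∀ u : List A, u <:+: w → u ∈ S

def Lext (S : Set (List A)) (w : List A) : Set A := {a | a :: w ∈ S}
def Rext (S : Set (List A)) (w : List A) : Set A := {a | w ++ [a] ∈ S}
def Eext (S : Set (List A)) (w : List A) : Set (A × A) := {p | p.1 :: (w ++ [p.2]) ∈ S}

def ExtVertex (S : Set (List A)) (w : List A) :=
  {v : A ⊕ A // Sum.elim (fun a => a ∈ Lext S w) (fun b => b ∈ Rext S w) v}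

/-- The extension graph of `w` in `S`. -/
def extGraph (S : Set (List A)) (w : List A) : SimpleGraph (ExtVertex S w) where
  Adj u v := (∃ a b, u.1 = Sum.inl a ∧ v.1 = Sum.inr b ∧ (a, b) ∈ Eext S w) ∨
             (∃ a b, u.1 = Sum.inr b ∧ v.1 = Sum.inl a ∧ (a, b) ∈ Eext S w)
  symm := ⟨by
    rintro u v (⟨a, b, h1, h2, h3⟩ | ⟨a, b, h1, h2, h3⟩)
    · exact Or.inr ⟨a, b, h2, h1, h3⟩
    · exact Or.inl ⟨a, b, h2, h1, h3⟩⟩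
  loopless := ⟨by
    rintro u (⟨a, b, h1, h2, _⟩ | ⟨a, b, h1, h2, _⟩) <;> rw [h1] at h2 <;> simp at h2⟩

def IsPrefixCode (X : Set (List A)) : Prop :=
  (∀ x ∈ X, x ≠ []) ∧ ∀ x ∈ X, ∀ y ∈ X, x <+: y → x = y

def IsSuffixCode (X : Set (List A)) : Prop :=
  (∀ x ∈ X, x ≠ []) ∧ ∀ x ∈ X, ∀ y ∈ X, x <:+ y → x = y

def IsBifixCode (X : Set (List A)) : Prop := IsPrefixCode X ∧ IsSuffixCode X

/-- The submonoid `X*` generated by a set of words. -/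
def starOf (X : Set (List A)) : Set (List A) :=
  {m | ∃ ls : List (List A), (∀ u ∈ ls, u ∈ X) ∧ m = ls.flatten}

/-- A parse of `w` with respect to `X` : `w = v ++ x ++ u`, `v` has no suffix in `X`,
`x ∈ X*`, `u` has no prefix in `X`. -/
def IsParse (X : Set (List A)) (w : List A) (p : List A × List A × List A) : Prop :=
  w = p.1 ++ p.2.1 ++ p.2.2 ∧ (∀ s, s <:+ p.1 → s ∉ X) ∧ p.2.1 ∈ starOf X ∧
    (∀ t, t <+: p.2.2 → t ∉ X)

noncomputable def parseCount (X : Set (List A)) (w : List A) : ℕ :=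
  {p : List A × List A × List A | IsParse X w p}.ncard

/-- `X` has `S`-degree `d`. -/
def SDegreeIs (S X : Set (List A)) (d : ℕ) : Prop :=
  (∀ w ∈ S, parseCount X w ≤ d) ∧ ∃ w ∈ S, parseCount X w = d

def IsSMaximalBifixCode (S X : Set (List A)) : Prop :=
  IsBifixCode X ∧ X ⊆ S ∧ ∀ Y : Set (List A), IsBifixCode Y → Y ⊆ S → X ⊆ Y → Y = X

def Recurrent (S : Set (List A)) : Prop :=
  Factorial S ∧ S ≠ {[]} ∧ S.Nonempty ∧ ∀ u ∈ S, ∀ w ∈ S, ∃ v, u ++ v ++ w ∈ S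

def UniformlyRecurrent (S : Set (List A)) : Prop :=
  Factorial S ∧ (∀ w ∈ S, ∃ a : A, w ++ [a] ∈ S) ∧
    ∀ u ∈ S, ∃ n : ℕ, ∀ w ∈ S, w.length = n → u <:+: w

/-- The element of the free group corresponding to a word. -/
def toFG (w : List A) : FreeGroup A := (w.map FreeGroup.of).prod

/-- `T` is a basis of the subgroup `H` of the free group on `A`. -/
def IsBasisOf (T : Set (FreeGroup A)) (H : Subgroup (FreeGroup A)) : Prop :=
  Function.Injective (FreeGroup.lift (Subtype.val : T → FreeGroup A)) ∧
  (FreeGroup.lift (Subtype.val : T → FreeGroup A)).range = H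

theorem card_eq_sum_ncard_of_injective {ι α β : Type*} [Finite α] {s : Finset ι} {t : Finset β}
    {E : ι → Set α} {e : ι → α → β} (he : Function.Injective (Function.uncurry e))
    (hmaps : ∀ i ∈ s, ∀ a ∈ E i, e i a ∈ t) (hcover : ∀ b ∈ t, ∃ i ∈ s, ∃ a ∈ E i, e i a = b) :
    t.card = ∑ i ∈ s, (E i).ncard := by
  rw [Finset.sum_congr rfl fun i _ => Set.ncard_eq_toFinset_card (E i) (Set.toFinite _),
    ← Finset.card_sigma]
  refine (Finset.card_bij (fun x _ => e x.1 x.2) ?_ ?_ ?_).symm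
  · rintro ⟨i, a⟩ hx
    simp only [Finset.mem_sigma, Set.Finite.mem_toFinset] at hx
    exact hmaps i hx.1 a hx.2
  · rintro ⟨i, a⟩ - ⟨j, b⟩ - hab
    cases he (a₁ := (i, a)) (a₂ := (j, b)) hab
    rfl
  · intro b hb
    obtain ⟨i, hi, a, ha, rfl⟩ := hcover b hb
    exact ⟨⟨i, a⟩, by simpa using ⟨hi, ha⟩, rfl⟩

theorem add_le_succ_of_second_diff_nonneg {p : ℕ → ℤ} {k : ℤ} (h0 : p 0 + k ≤ p 1)
    (h : ∀ n, 0 ≤ p (n + 2) - 2 * p (n + 1) + p n) (n : ℕ) : p n + k ≤ p (n + 1) := by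
  induction n with
  | zero => exact h0
  | succ n ih => linarith [h n]

theorem succ_le_add_of_second_diff_nonpos {p : ℕ → ℤ} {k : ℤ} (h0 : p 1 ≤ p 0 + k)
    (h : ∀ n, p (n + 2) - 2 * p (n + 1) + p n ≤ 0) (n : ℕ) : p (n + 1) ≤ p n + k := by
  have := add_le_succ_of_second_diff_nonneg (p := (- p ·)) (k := -k) (by linarith)
    (fun n => by linarith [h n]) n
  linarith

section Words

variable [Finite A] {S : Set (List A)}

noncomputable def words (S : Set (List A)) (n : ℕ) : Finset (List A) :=
  ((List.finite_length_eq A n).subset fun _ hw => hw.2 : {w ∈ S | w.length = n}.Finite).toFinset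

@[simp]
theorem mem_words {n : ℕ} {w : List A} : w ∈ words S n ↔ w ∈ S ∧ w.length = n := by
  simp [words]

theorem ncard_eq_card_words (S : Set (List A)) (n : ℕ) :
    {w ∈ S | w.length = n}.ncard = (words S n).card :=
  Set.ncard_eq_toFinset_card _ _

theorem words_zero (hnil : [] ∈ S) : words S 0 = {[]} := by
  ext w
  simp only [mem_words, List.length_eq_zero_iff, Finset.mem_singleton]
  exact ⟨And.right, by rintro rfl; exact ⟨hnil, rfl⟩⟩

theorem card_words_succ_eq_sum_ncard_rext (hS : Factorial S) (n : ℕ) :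
    (words S (n + 1)).card = ∑ u ∈ words S n, (Rext S u).ncard := by
  refine card_eq_sum_ncard_of_injective (e := fun u a => u ++ [a]) ?_ ?_ ?_
  · rintro ⟨u, a⟩ ⟨v, b⟩ h
    obtain ⟨rfl, h⟩ := List.append_inj h (by simpa using congrArg List.length h)
    simp_all
  · intro u hu a ha
    simp_all [Rext]
  · intro w hw
    rw [mem_words] at hw
    obtain rfl | ⟨u, a, rfl⟩ := w.eq_nil_or_concat'
    · simp at hw
    · exact ⟨u, by simpa [hS _ hw.1 u (List.prefix_append u [a]).isInfix] using hw.2, a, hw.1, rfl⟩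

theorem card_words_succ_eq_sum_ncard_lext (hS : Factorial S) (n : ℕ) :
    (words S (n + 1)).card = ∑ u ∈ words S n, (Lext S u).ncard := by
  refine card_eq_sum_ncard_of_injective (e := fun u a => a :: u) ?_ ?_ ?_
  · rintro ⟨u, a⟩ ⟨v, b⟩ h
    simp_all
  · intro u hu a ha
    simp_all [Lext]
  · intro w hw
    rw [mem_words] at hw
    obtain _ | ⟨a, u⟩ := w
    · simp at hw
    · exact ⟨u, by simpa [hS _ hw.1 u (List.suffix_cons a u).isInfix] using hw.2, a, hw.1, rfl⟩

theorem card_words_add_two_eq_sum_ncard_eext (hS : Factorial S) (n : ℕ) :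
    (words S (n + 2)).card = ∑ u ∈ words S n, (Eext S u).ncard := by
  refine card_eq_sum_ncard_of_injective (e := fun u p => p.1 :: (u ++ [p.2])) ?_ ?_ ?_
  · rintro ⟨u, a, b⟩ ⟨v, c, d⟩ h
    simp only [Function.uncurry_apply_pair, List.cons.injEq] at h
    obtain ⟨rfl, h⟩ := h
    obtain ⟨rfl, h⟩ := List.append_inj h (by simpa using congrArg List.length h)
    simp_all
  · intro u hu p hp
    simp_all [Eext]
  · intro w hw
    rw [mem_words] at hw
    obtain _ | ⟨a, w⟩ := w
    · simp at hw
    obtain rfl | ⟨u, b, rfl⟩ := w.eq_nil_or_concat'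
    · simp at hw
    have hu : u <:+: a :: (u ++ [b]) := ⟨[a], [b], by simp⟩
    exact ⟨u, by simpa [hS _ hw.1 u hu] using hw.2, (a, b), hw.1, rfl⟩

noncomputable def extMultiplicity (S : Set (List A)) (w : List A) : ℤ :=
  (Eext S w).ncard - (Lext S w).ncard - (Rext S w).ncard + 1

theorem sum_extMultiplicity_words (hS : Factorial S) (n : ℕ) :
    ∑ u ∈ words S n, extMultiplicity S u =
      ((words S (n + 2)).card : ℤ) - 2 * (words S (n + 1)).card + (words S n).card := by
  have he : ((words S (n + 2)).card : ℤ) = ∑ u ∈ words S n, ((Eext S u).ncard : ℤ) := by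
    exact_mod_cast card_words_add_two_eq_sum_ncard_eext hS n
  have hl : ((words S (n + 1)).card : ℤ) = ∑ u ∈ words S n, ((Lext S u).ncard : ℤ) := by
    exact_mod_cast card_words_succ_eq_sum_ncard_lext hS n
  have hr : ((words S (n + 1)).card : ℤ) = ∑ u ∈ words S n, ((Rext S u).ncard : ℤ) := by
    exact_mod_cast card_words_succ_eq_sum_ncard_rext hS n
  simp only [extMultiplicity, Finset.sum_add_distrib, Finset.sum_sub_distrib, Finset.sum_const,
    nsmul_eq_mul, mul_one]
  linarith

end Words

/-- Over `k + 1` letters, if `S` is strong then `s n ≥ k` for all `n`,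
and if `S` is weak then `s n ≤ k` for all `n`, where `s n = p (n+1) - p n`. -/
theorem strong_weak_first_difference {A : Type*} [Fintype A] (S : Set (List A)) (k : ℕ)
    (hfac : Factorial S) (hk : {a : A | [a] ∈ S}.ncard = k + 1) :
    ((∀ w ∈ S, (0 : ℤ) ≤ ((Eext S w).ncard : ℤ) - (Lext S w).ncard - (Rext S w).ncard + 1) →
      ∀ n : ℕ, {w ∈ S | w.length = n}.ncard + k ≤ {w ∈ S | w.length = n + 1}.ncard) ∧
    ((∀ w ∈ S, ((Eext S w).ncard : ℤ) - (Lext S w).ncard - (Rext S w).ncard + 1 ≤ 0) →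
      ∀ n : ℕ, {w ∈ S | w.length = n + 1}.ncard ≤ {w ∈ S | w.length = n}.ncard + k) := by
  have hnil : [] ∈ S := by
    obtain ⟨a, ha⟩ := Set.nonempty_of_ncard_ne_zero (s := {a : A | [a] ∈ S}) (by omega)
    exact hfac [a] ha [] List.nil_infix
  set p : ℕ → ℤ := fun n => (words S n).card
  have hp0 : p 0 = 1 := by simp [p, words_zero hnil]
  have hp1 : p 1 = k + 1 := by
    simp [p, card_words_succ_eq_sum_ncard_lext hfac 0, words_zero hnil, Lext, hk]
  have hsecond n : p (n + 2) - 2 * p (n + 1) + p n = ∑ u ∈ words S n, extMultiplicity S u :=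
    (sum_extMultiplicity_words hfac n).symm
  simp only [ncard_eq_card_words]
  refine ⟨fun hstrong n => ?_, fun hweak n => ?_⟩
  · have := add_le_succ_of_second_diff_nonneg (p := p) (k := k) (by omega)
      (fun n => hsecond n ▸ Finset.sum_nonneg fun u hu => hstrong u (mem_words.1 hu).1) n
    simp only [p] at this
    exact_mod_cast this
  · have := succ_le_add_of_second_diff_nonpos (p := p) (k := k) (by omega)
      (fun n => hsecond n ▸ Finset.sum_nonpos fun u hu => hweak u (mem_words.1 hu).1) n
    simp only [p] at this
    exact_mod_cast this

end Paper
end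

section
/- In a Sturmian set S, every word w is ordinary: there exist (a,b) ∈ E(w) such that E(w) ⊆ ({a} × A) ∪ (A × {b}). -/
/-! If `w` has a single right (or a single left) extension, any `(a, b) ∈ E(w)` works.
Otherwise `w` is bispecial, so `w` and its reversal are right-special of the same length,
hence `w` is a palindrome; and the right-special factor of length `|w| + 1` is `a w` for a
letter `a`, with every letter as right extension. Reversing `a w c` gives `(c, a) ∈ E(w)` for
all `c`, while a pair `(c, d) ∈ E(w)` with `c ≠ a ≠ d` would make `c w` a second right-special
factor of length `|w| + 1`. So `(a, a)` works. -/

namespace Paper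

variable {A : Type*}

/-- The set of factors of the infinite word `x`. -/
def factorsOf (x : ℕ → A) : Set (List A) :=
  {w | ∃ i : ℕ, w = (List.range w.length).map fun j => x (i + j)}

def IsRightSpecial (S : Set (List A)) (w : List A) : Prop := 2 ≤ (Rext S w).ncard

/-- `x` is a strict episturmian word: its set of factors is closed under reversal,
has exactly one right-special factor of each length, and every right-special factor `u`
satisfies `r u = Card A`. -/
def IsStrictEpisturmian [Fintype A] (x : ℕ → A) : Prop :=
  (∀ w ∈ factorsOf x, w.reverse ∈ factorsOf x) ∧
  (∀ n : ℕ, ∃! w : List A,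
      w ∈ factorsOf x ∧ w.length = n ∧ IsRightSpecial (factorsOf x) w) ∧
  (∀ w ∈ factorsOf x, IsRightSpecial (factorsOf x) w →
      (Rext (factorsOf x) w).ncard = Fintype.card A)

theorem factorial_factorsOf (x : ℕ → A) : Factorial (factorsOf x) := by
  rintro w ⟨i, hw⟩ u ⟨s, t, rfl⟩
  refine ⟨i + s.length, List.ext_getElem (by simp) fun k hk _ => ?_⟩
  have hk' := List.getElem_of_eq hw (i := s.length + k) (by simp; omega)
  simp only [List.append_assoc, List.length_append, List.getElem_append_right,
    List.getElem_append_left, hk, le_add_iff_nonneg_right, zero_le, add_tsub_cancel_left,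
    List.getElem_map, List.getElem_range] at hk'
  simp [hk', Nat.add_assoc]

theorem exists_append_singleton_mem_factorsOf {x : ℕ → A} {w : List A}
    (hw : w ∈ factorsOf x) : ∃ b, w ++ [b] ∈ factorsOf x := by
  obtain ⟨i, hw⟩ := hw
  refine ⟨x (i + w.length), i, ?_⟩
  conv_lhs => rw [hw]
  simp [List.range_succ]

def IsOrdinary (S : Set (List A)) (w : List A) : Prop :=
  ∃ a b : A, (a, b) ∈ Eext S w ∧ Eext S w ⊆ {p : A × A | p.1 = a} ∪ {p : A × A | p.2 = b}

section Extensions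

variable {S : Set (List A)} {w : List A}

theorem Factorial.mem_lext_of_mem_eext (hS : Factorial S) {a b : A} (h : (a, b) ∈ Eext S w) :
    a ∈ Lext S w :=
  hS _ h _ ⟨[], [b], by simp⟩

theorem Factorial.mem_rext_of_mem_eext (hS : Factorial S) {a b : A} (h : (a, b) ∈ Eext S w) :
    b ∈ Rext S w :=
  hS _ h _ ⟨[a], [], by simp⟩

theorem Factorial.rext_cons_subset (hS : Factorial S) (a : A) : Rext S (a :: w) ⊆ Rext S w :=
  fun _ h => hS _ h _ ⟨[a], [], by simp⟩

theorem mem_eext_iff_of_reverse (hrev : ∀ v ∈ S, v.reverse ∈ S) {a b : A} :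
    (a, b) ∈ Eext S w ↔ (b, a) ∈ Eext S w.reverse := by
  have hiff : ∀ v, v ∈ S ↔ v.reverse ∈ S :=
    fun v => ⟨hrev v, fun h => by simpa using hrev _ h⟩
  simp [Eext, hiff (a :: (w ++ [b]))]

theorem lext_eq_rext_reverse (hrev : ∀ v ∈ S, v.reverse ∈ S) : Lext S w = Rext S w.reverse := by
  ext a
  constructor <;> intro h <;> simpa [Lext, Rext] using hrev _ h

theorem eext_nonempty (hrev : ∀ v ∈ S, v.reverse ∈ S) (hext : ∀ v ∈ S, ∃ b, v ++ [b] ∈ S)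
    (hw : w ∈ S) : (Eext S w).Nonempty := by
  obtain ⟨b, hb⟩ := hext w hw
  obtain ⟨a, ha⟩ := hext _ (hrev _ hb)
  exact ⟨(a, b), by simpa [Eext] using hrev _ ha⟩

theorem isRightSpecial_iff_nontrivial [Finite A] :
    IsRightSpecial S w ↔ (Rext S w).Nontrivial :=
  Set.one_lt_ncard_iff_nontrivial

theorem isOrdinary_of_rext_subsingleton (hS : Factorial S) (hE : (Eext S w).Nonempty)
    (hR : (Rext S w).Subsingleton) : IsOrdinary S w := by
  obtain ⟨⟨a, b⟩, hab⟩ := hE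
  exact ⟨a, b, hab, fun p hp =>
    Or.inr (hR (hS.mem_rext_of_mem_eext hp) (hS.mem_rext_of_mem_eext hab))⟩

theorem isOrdinary_of_lext_subsingleton (hS : Factorial S) (hE : (Eext S w).Nonempty)
    (hL : (Lext S w).Subsingleton) : IsOrdinary S w := by
  obtain ⟨⟨a, b⟩, hab⟩ := hE
  exact ⟨a, b, hab, fun p hp =>
    Or.inl (hL (hS.mem_lext_of_mem_eext hp) (hS.mem_lext_of_mem_eext hab))⟩

theorem isOrdinary_of_bispecial [Fintype A] (hS : Factorial S)
    (hrev : ∀ v ∈ S, v.reverse ∈ S)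
    (hunique : ∀ u ∈ S, ∀ v ∈ S, IsRightSpecial S u → IsRightSpecial S v →
      u.length = v.length → u = v)
    (hfull : ∀ v ∈ S, IsRightSpecial S v → (Rext S v).ncard = Fintype.card A)
    (hw : w ∈ S) (hR : IsRightSpecial S w) (hL : IsRightSpecial S w.reverse)
    (hnext : ∃ u ∈ S, u.length = w.length + 1 ∧ IsRightSpecial S u) : IsOrdinary S w := by
  obtain ⟨u, hu, hulen, huR⟩ := hnext
  obtain ⟨a, t, rfl⟩ := List.exists_cons_of_ne_nil (List.ne_nil_of_length_eq_add_one hulen)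
  have htR : IsRightSpecial S t := isRightSpecial_iff_nontrivial.2 <|
    (isRightSpecial_iff_nontrivial.1 huR).mono (hS.rext_cons_subset a)
  obtain rfl : t = w := hunique t (hS _ hu _ (List.suffix_cons a t).isInfix) w hw htR hR
    (by simpa using hulen)
  have hpal : t.reverse = t := hunique _ (hrev _ hw) _ hw hL hR (by simp)
  have hfullR : Rext S (a :: t) = Set.univ :=
    (Set.eq_univ_iff_ncard _).2 (by rw [hfull _ hu huR, Nat.card_eq_fintype_card])
  have hcol : ∀ c, (c, a) ∈ Eext S t := fun c => by
    have hc : c ∈ Rext S (a :: t) := hfullR ▸ Set.mem_univ c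
    rw [mem_eext_iff_of_reverse hrev, hpal]
    simpa [Eext, Rext] using hc
  refine ⟨a, a, hcol a, fun ⟨c, d⟩ hcd => ?_⟩
  by_contra h
  simp only [Set.mem_union, Set.mem_ofPred_eq, not_or] at h
  obtain ⟨hca, hda⟩ := h
  have hcR : IsRightSpecial S (c :: t) := isRightSpecial_iff_nontrivial.2
    ⟨d, by simpa [Rext, Eext] using hcd, a, by simpa [Rext, Eext] using hcol c, hda⟩
  exact hca (List.cons.inj (hunique _ (hS.mem_lext_of_mem_eext hcd) _ hu hcR huR rfl)).1

end Extensions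

/-- In a Sturmian set (the set of factors of a strict episturmian word),
every word is ordinary. -/
theorem sturmian_word_is_ordinary {A : Type*} [Fintype A] (x : ℕ → A)
    (hx : IsStrictEpisturmian x) :
    ∀ w ∈ factorsOf x, ∃ a b : A, (a, b) ∈ Eext (factorsOf x) w ∧
      Eext (factorsOf x) w ⊆ {p : A × A | p.1 = a} ∪ {p : A × A | p.2 = b} := by
  intro w hw
  obtain ⟨hrev, hone, hfull⟩ := hx
  have hS := factorial_factorsOf x
  have hE := eext_nonempty hrev (fun _ => exists_append_singleton_mem_factorsOf) hw
  by_cases hR : IsRightSpecial (factorsOf x) w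
  · by_cases hL : IsRightSpecial (factorsOf x) w.reverse
    · refine isOrdinary_of_bispecial hS hrev (fun u hu v hv hu' hv' hl => ?_) hfull hw hR hL
        (hone _).exists
      exact (hone u.length).unique ⟨hu, rfl, hu'⟩ ⟨hv, hl.symm, hv'⟩
    · rw [isRightSpecial_iff_nontrivial, ← lext_eq_rext_reverse hrev,
        Set.not_nontrivial_iff] at hL
      exact isOrdinary_of_lext_subsingleton hS hE hL
  · rw [isRightSpecial_iff_nontrivial, Set.not_nontrivial_iff] at hR
    exact isOrdinary_of_rext_subsingleton hS hE hR

end Paper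
end
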